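/- arXiv:2102.07691 — 2 statements merged into one kernel-verified Lean document; each statement's English description precedes it below -/
import Mathlib

section
/- Let θ be a real skew-symmetric n×n matrix and F a finite group acting on ℤⁿ by automorphisms such that each group element acts by a matrix W with Wᵀ θ W = θ. Define ω'_θ((x,s),(y,t)) = exp(-2πi·⟨θ x, s·y⟩) on the semidirect product ℤⁿ ⋊ F. Then ω'_θ is a 2-cocycle on ℤⁿ ⋊ F. -/
open Matrix Complex

/-! Writing `B(u, v) = ⟨θ u, v⟩`, the exponent of `ω'` is `B(x, s y)`, and the cocycle identity
reduces, after expanding `B` bilinearly, to `B(s y, s t z) = B(y, t z)`, which is the invariance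
`sᵀ θ s = θ`. -/

section Phase

variable {ι R F : Type*} [Fintype ι] [CommRing R] [Monoid F]

theorem dotProduct_mulVec_mulVec_of_transpose_mul_mul_eq {θ W : Matrix ι ι R}
    (hW : Wᵀ * θ * W = θ) (u v : ι → R) :
    (θ *ᵥ (W *ᵥ u)) ⬝ᵥ (W *ᵥ v) = (θ *ᵥ u) ⬝ᵥ v := by
  rw [mulVec_mulVec, dotProduct_mulVec, ← mulVec_transpose, mulVec_mulVec, ← Matrix.mul_assoc,
    hW]

variable [DecidableEq ι]

/-- The exponent `⟨θ x, s · y⟩` of `ω'((x, s), (y, t))`; it does not depend on `t`. -/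
def semidirectPhase (θ : Matrix ι ι R) (ρ : F →* Matrix ι ι R) (x : ι → R) (s : F)
    (y : ι → R) : R :=
  (θ *ᵥ x) ⬝ᵥ (ρ s *ᵥ y)

@[simp]
theorem semidirectPhase_zero_left (θ : Matrix ι ι R) (ρ : F →* Matrix ι ι R) (s : F)
    (y : ι → R) : semidirectPhase θ ρ 0 s y = 0 := by
  rw [semidirectPhase, mulVec_zero, zero_dotProduct]

@[simp]
theorem semidirectPhase_zero_right (θ : Matrix ι ι R) (ρ : F →* Matrix ι ι R) (x : ι → R)
    (s : F) : semidirectPhase θ ρ x s 0 = 0 := by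
  rw [semidirectPhase, mulVec_zero, dotProduct_zero]

theorem semidirectPhase_cocycle {θ : Matrix ι ι R} {ρ : F →* Matrix ι ι R}
    (hρ : ∀ s, (ρ s)ᵀ * θ * ρ s = θ) (x y z : ι → R) (s t : F) :
    semidirectPhase θ ρ x s y + semidirectPhase θ ρ (x + ρ s *ᵥ y) (s * t) z =
      semidirectPhase θ ρ x s (y + ρ t *ᵥ z) + semidirectPhase θ ρ y t z := by
  have hinv := dotProduct_mulVec_mulVec_of_transpose_mul_mul_eq (hρ s) y (ρ t *ᵥ z)
  simp only [semidirectPhase, map_mul, ← mulVec_mulVec, mulVec_add, add_dotProduct,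
    dotProduct_add, hinv]
  ring

end Phase

theorem stmt_1_general {n : ℕ} (θ : Matrix (Fin n) (Fin n) ℝ)
    (F : Type*) [Group F]
    (φ : F →* Matrix.GeneralLinearGroup (Fin n) ℤ)
    (hsymp : ∀ s : F,
      ((φ s : Matrix (Fin n) (Fin n) ℤ).map (Int.cast : ℤ → ℝ))ᵀ * θ *
        ((φ s : Matrix (Fin n) (Fin n) ℤ).map (Int.cast : ℤ → ℝ)) = θ)
    (ω : ((Fin n → ℤ) × F) → ((Fin n → ℤ) × F) → ℂ)
    (hω : ∀ (x y : Fin n → ℤ) (s t : F),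
      ω (x, s) (y, t) =
        Complex.exp (-(2 * Real.pi * Complex.I) *
          (∑ i : Fin n,
            (θ.mulVec (fun j => ((x j : ℝ)))) i *
              (((φ s : Matrix (Fin n) (Fin n) ℤ).mulVec y) i : ℝ)))) :
    (∀ (x y z : Fin n → ℤ) (s t u : F),
        ω (x, s) (y, t) *
          ω (x + (φ s : Matrix (Fin n) (Fin n) ℤ).mulVec y, s * t) (z, u) =
        ω (x, s) (y + (φ t : Matrix (Fin n) (Fin n) ℤ).mulVec z, t * u) *
          ω (y, t) (z, u)) ∧
    (∀ (x : Fin n → ℤ) (s : F), ω (x, s) (0, 1) = 1 ∧ ω (0, 1) (x, s) = 1) := by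
  let cast : ℤ →+* ℝ := Int.castRingHom ℝ
  let ρ : F →* Matrix (Fin n) (Fin n) ℝ :=
    cast.mapMatrix.toMonoidHom.comp ((Units.coeHom _).comp φ)
  have hρ (s : F) : (ρ s)ᵀ * θ * ρ s = θ := hsymp s
  have hcast_mulVec (s : F) (y : Fin n → ℤ) :
      cast ∘ ((φ s : Matrix (Fin n) (Fin n) ℤ) *ᵥ y) = ρ s *ᵥ (cast ∘ y) :=
    funext (cast.map_mulVec _ y)
  have hω_phase (x y : Fin n → ℤ) (s t : F) :
      ω (x, s) (y, t) = Complex.exp (-(2 * Real.pi * Complex.I) *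
        (semidirectPhase θ ρ (cast ∘ x) s (cast ∘ y) : ℝ)) := by
    rw [hω, semidirectPhase, ← hcast_mulVec]
    push_cast [dotProduct]
    rfl
  have hcast_add (x y : Fin n → ℤ) (s : F) :
      cast ∘ (x + (φ s : Matrix (Fin n) (Fin n) ℤ) *ᵥ y) = cast ∘ x + ρ s *ᵥ (cast ∘ y) := by
    rw [← hcast_mulVec]
    exact funext fun i => map_add cast _ _
  have hcast_zero : cast ∘ (0 : Fin n → ℤ) = 0 := funext fun _ => map_zero cast
  refine ⟨fun x y z s t u => ?_, fun x s => ⟨?_, ?_⟩⟩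
  · rw [hω_phase, hω_phase, hω_phase, hω_phase, hcast_add, hcast_add, ← Complex.exp_add,
      ← Complex.exp_add, ← mul_add, ← mul_add, ← ofReal_add, ← ofReal_add,
      semidirectPhase_cocycle hρ]
  · rw [hω_phase, hcast_zero, semidirectPhase_zero_right, ofReal_zero, mul_zero, Complex.exp_zero]
  · rw [hω_phase, hcast_zero, semidirectPhase_zero_left, ofReal_zero, mul_zero, Complex.exp_zero]

/-- For θ a real skew-symmetric n×n matrix and F a finite group acting on ℤⁿ
through matrices W ∈ GL(n,ℤ) with Wᵀ θ W = θ, the map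
ω'((x,s),(y,t)) = exp(-2πi⟨θx, s·y⟩) is a 2-cocycle on ℤⁿ ⋊ F,
where the semidirect product multiplication is (x,s)(y,t) = (x + s·y, st). -/
theorem stmt_1 {n : ℕ} (θ : Matrix (Fin n) (Fin n) ℝ) (hθ : θᵀ = -θ)
    (F : Type*) [Group F] [Fintype F]
    (φ : F →* Matrix.GeneralLinearGroup (Fin n) ℤ)
    (hsymp : ∀ s : F,
      ((φ s : Matrix (Fin n) (Fin n) ℤ).map (Int.cast : ℤ → ℝ))ᵀ * θ *
        ((φ s : Matrix (Fin n) (Fin n) ℤ).map (Int.cast : ℤ → ℝ)) = θ)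
    (ω : ((Fin n → ℤ) × F) → ((Fin n → ℤ) × F) → ℂ)
    (hω : ∀ (x y : Fin n → ℤ) (s t : F),
      ω (x, s) (y, t) =
        Complex.exp (-(2 * Real.pi * Complex.I) *
          (∑ i : Fin n,
            (θ.mulVec (fun j => ((x j : ℝ)))) i *
              (((φ s : Matrix (Fin n) (Fin n) ℤ).mulVec y) i : ℝ)))) :
    (∀ (x y z : Fin n → ℤ) (s t u : F),
        ω (x, s) (y, t) *
          ω (x + (φ s : Matrix (Fin n) (Fin n) ℤ).mulVec y, s * t) (z, u) =
        ω (x, s) (y + (φ t : Matrix (Fin n) (Fin n) ℤ).mulVec z, t * u) *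
          ω (y, t) (z, u)) ∧
    (∀ (x : Fin n → ℤ) (s : F), ω (x, s) (0, 1) = 1 ∧ ω (0, 1) (x, s) = 1) :=
  stmt_1_general θ F φ hsymp ω hω
end

section
/- For any real skew-symmetric n×n matrix θ, there exists a positive integer t such that all Pfaffian minors of θ + tZ are strictly positive, where Z is the skew-symmetric matrix with all entries above the diagonal equal to 1. -/
/-
Since `Z` restricts to `Z` along an increasing `I`, the minor of `θ + t • Z` at `I` is
`pf (θ_I + t • Z) = t ^ m * pf (Z + t⁻¹ • θ_I)`; by continuity of the Pfaffian it therefore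
suffices that `pf Z > 0`. In the permutation expansion of `pf Z`, left multiplication by the transposition of
the values `2k, 2k + 1`, for the least `k` whose two values do not sit in one pair of positions, is
a sign-reversing involution. The permutations that survive send pairs of positions onto pairs of
values, and each of them contributes `+1`.
-/

open Matrix

/-- The Pfaffian of a 2m×2m real matrix, via the sum-over-permutations formula
pf(A) = (1/(2^m m!)) Σ_σ sign(σ) Π_{i=1}^{m} A_{σ(2i-1) σ(2i)}. -/
noncomputable def pfaffian {m : ℕ} (A : Matrix (Fin (2 * m)) (Fin (2 * m)) ℝ) : ℝ :=
  (1 / (2 ^ m * (Nat.factorial m : ℝ))) *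
    ∑ σ : Equiv.Perm (Fin (2 * m)), ((Equiv.Perm.sign σ : ℤ) : ℝ) *
      ∏ i : Fin m,
        A (σ ⟨2 * i.val, by have := i.isLt; omega⟩)
          (σ ⟨2 * i.val + 1, by have := i.isLt; omega⟩)

open Equiv Finset Filter Topology

section FiberPermuting

variable {α β : Type*}

def fiberPermuting (f : α → β) : Subgroup (Perm α) where
  carrier := {σ | ∀ x y, f (σ x) = f (σ y) ↔ f x = f y}
  mul_mem' hσ hτ x y := (hσ _ _).trans (hτ x y)
  one_mem' _ _ := Iff.rfl
  inv_mem' {σ} hσ x y := by simpa using (hσ (σ⁻¹ x) (σ⁻¹ y)).symm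

instance [Fintype α] [DecidableEq β] (f : α → β) : DecidablePred (· ∈ fiberPermuting f) :=
  fun σ => inferInstanceAs (Decidable (∀ x y, f (σ x) = f (σ y) ↔ f x = f y))

/-- The map induced on the finitely many fibres is surjective, hence injective. -/
theorem mem_fiberPermuting_of_forall [Finite β] {f : α → β} (hf : Function.Surjective f)
    {σ : Perm α} (h : ∀ x y, f x = f y → f (σ x) = f (σ y)) : σ ∈ fiberPermuting f := by
  set u : β → β := fun b => f (σ (Function.surjInv hf b))
  have hu : ∀ x, f (σ x) = u (f x) := fun x => h _ _ (Function.surjInv_eq hf _).symm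
  have hu_surj : Function.Surjective u := fun b =>
    ⟨f (σ⁻¹ (Function.surjInv hf b)), by rw [← hu]; simp [Function.surjInv_eq]⟩
  intro x y
  rw [hu, hu, (Finite.injective_iff_surjective.2 hu_surj).eq_iff]

end FiberPermuting

theorem swap_lt_swap_iff_of_covBy {α : Type*} [LinearOrder α] {u w a b : α} (huw : u ⋖ w)
    (hab : s(a, b) ≠ s(u, w)) : swap u w a < swap u w b ↔ a < b := by
  have above : ∀ c, c ≠ u → c ≠ w → (u < c ↔ w < c) := fun c _ hw =>
    ⟨fun h => (huw.ge_of_gt h).lt_of_ne' hw, huw.lt.trans⟩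
  have below : ∀ c, c ≠ u → c ≠ w → (c < u ↔ c < w) := fun c hu _ =>
    ⟨(·.trans huw.lt), fun h => (huw.le_of_lt h).lt_of_ne hu⟩
  have huw_lt := huw.lt
  rw [Ne, Sym2.eq_iff] at hab
  simp only [swap_apply_def]
  split_ifs <;> subst_vars <;> simp_all

def orderSignMatrix (ι : Type*) [LinearOrder ι] : Matrix ι ι ℝ :=
  of fun i j => if i < j then 1 else if j < i then -1 else 0

section OrderSignMatrix

variable {ι κ : Type*} [LinearOrder ι] [LinearOrder κ]

theorem orderSignMatrix_apply (i j : ι) :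
    orderSignMatrix ι i j = if i < j then 1 else if j < i then -1 else 0 := rfl

theorem orderSignMatrix_submatrix {I : ι → κ} (hI : StrictMono I) :
    (orderSignMatrix κ).submatrix I I = orderSignMatrix ι := by
  ext i j
  simp only [submatrix_apply, orderSignMatrix_apply, hI.lt_iff_lt]

theorem orderSignMatrix_swap_apply {u w a b : ι} (huw : u ⋖ w) (hab : s(a, b) ≠ s(u, w)) :
    orderSignMatrix ι (swap u w a) (swap u w b) = orderSignMatrix ι a b := by
  have hba : s(b, a) ≠ s(u, w) := by rwa [Sym2.eq_swap]
  simp only [orderSignMatrix_apply, swap_lt_swap_iff_of_covBy huw hab,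
    swap_lt_swap_iff_of_covBy huw hba]

theorem orderSignMatrix_fin_two_apply_perm (ρ : Perm (Fin 2)) :
    orderSignMatrix (Fin 2) (ρ 0) (ρ 1) = ((Perm.sign ρ : ℤ) : ℝ) := by
  have : (ρ 0 < ρ 1 ∧ Perm.sign ρ = 1) ∨ (ρ 1 < ρ 0 ∧ Perm.sign ρ = -1) := by
    revert ρ; decide
  rcases this with ⟨hlt, hs⟩ | ⟨hlt, hs⟩
  · simp [orderSignMatrix_apply, hlt, hs]
  · simp [orderSignMatrix_apply, hlt, hlt.not_gt, hs]

end OrderSignMatrix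

section PairBlocks

variable {m : ℕ}

def pairEquiv (m : ℕ) : Fin m × Fin 2 ≃ Fin (2 * m) :=
  finProdFinEquiv.trans (finCongr (Nat.mul_comm m 2))

@[simp]
theorem pairEquiv_apply_val (x : Fin m × Fin 2) : (pairEquiv m x : ℕ) = x.2 + 2 * x.1 := by
  simp [pairEquiv]

theorem pairEquiv_covBy (i : Fin m) : pairEquiv m (i, 0) ⋖ pairEquiv m (i, 1) := by
  simp [Fin.covBy_iff, add_comm]

theorem strictMono_pairEquiv (i : Fin m) : StrictMono fun r => pairEquiv m (i, r) := by
  intro r r' h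
  rw [Fin.lt_def, pairEquiv_apply_val, pairEquiv_apply_val]
  exact Nat.add_lt_add_right h _

def pairIndex (p : Fin (2 * m)) : Fin m := ((pairEquiv m).symm p).1

@[simp]
theorem pairIndex_pairEquiv (x : Fin m × Fin 2) : pairIndex (pairEquiv m x) = x.1 := by
  simp [pairIndex]

theorem pairIndex_surjective : Function.Surjective (pairIndex (m := m)) :=
  fun i => ⟨pairEquiv m (i, 0), by simp⟩

abbrev pairStabilizer (m : ℕ) : Subgroup (Perm (Fin (2 * m))) := fiberPermuting pairIndex

theorem mem_pairStabilizer_iff {σ : Perm (Fin (2 * m))} :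
    σ ∈ pairStabilizer m ↔
      ∀ k, pairIndex (σ (pairEquiv m (k, 0))) = pairIndex (σ (pairEquiv m (k, 1))) := by
  refine ⟨fun hσ k => (hσ _ _).2 (by simp), fun h => ?_⟩
  have hfst (x : Fin m × Fin 2) :
      pairIndex (σ (pairEquiv m x)) = pairIndex (σ (pairEquiv m (x.1, 0))) := by
    obtain ⟨k, r⟩ := x
    fin_cases r
    exacts [rfl, (h k).symm]
  refine mem_fiberPermuting_of_forall pairIndex_surjective fun p q hpq => ?_
  obtain ⟨x, rfl⟩ := (pairEquiv m).surjective p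
  obtain ⟨y, rfl⟩ := (pairEquiv m).surjective q
  simp only [pairIndex_pairEquiv] at hpq
  rw [hfst x, hfst y, hpq]

end PairBlocks

section PfaffianTerm

variable {m : ℕ}

noncomputable def pfaffianTerm (A : Matrix (Fin (2 * m)) (Fin (2 * m)) ℝ)
    (σ : Perm (Fin (2 * m))) : ℝ :=
  ((Perm.sign σ : ℤ) : ℝ) * ∏ i : Fin m, A (σ (pairEquiv m (i, 0))) (σ (pairEquiv m (i, 1)))

theorem pfaffian_eq_sum_pfaffianTerm (A : Matrix (Fin (2 * m)) (Fin (2 * m)) ℝ) :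
    pfaffian A = (2 ^ m * (m.factorial : ℝ))⁻¹ * ∑ σ, pfaffianTerm A σ := by
  have h₀ (i : Fin m) : (⟨2 * i, by omega⟩ : Fin (2 * m)) = pairEquiv m (i, 0) := Fin.ext (by simp)
  have h₁ (i : Fin m) : (⟨2 * i + 1, by omega⟩ : Fin (2 * m)) = pairEquiv m (i, 1) :=
    Fin.ext (by simp [add_comm])
  simp only [pfaffian, pfaffianTerm, one_div, h₀, h₁]

def brokenPairs (σ : Perm (Fin (2 * m))) : Finset (Fin m) :=
  {k | pairIndex (σ⁻¹ (pairEquiv m (k, 0))) ≠ pairIndex (σ⁻¹ (pairEquiv m (k, 1)))}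

theorem brokenPairs_eq_empty_iff {σ : Perm (Fin (2 * m))} :
    brokenPairs σ = ∅ ↔ σ ∈ pairStabilizer m := by
  rw [← inv_mem_iff, mem_pairStabilizer_iff, brokenPairs, filter_eq_empty_iff]
  simp

theorem brokenPairs_swap_mul (k : Fin m) (σ : Perm (Fin (2 * m))) :
    brokenPairs (swap (pairEquiv m (k, 0)) (pairEquiv m (k, 1)) * σ) = brokenPairs σ := by
  ext k'
  simp only [brokenPairs, mem_filter, mem_univ, true_and, _root_.mul_inv_rev, swap_inv,
    Perm.mul_apply]
  rcases eq_or_ne k' k with rfl | hne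
  · rw [swap_apply_left, swap_apply_right, ne_comm]
  · have hne' (r r' : Fin 2) : pairEquiv m (k', r) ≠ pairEquiv m (k, r') := by simp [hne]
    rw [swap_apply_of_ne_of_ne (hne' 0 0) (hne' 0 1), swap_apply_of_ne_of_ne (hne' 1 0) (hne' 1 1)]

/-- Swapping the adjacent values of a broken pair changes no comparison inside a pair of
positions, but changes the sign of the permutation. -/
theorem pfaffianTerm_swap_mul {σ : Perm (Fin (2 * m))} {k : Fin m} (hk : k ∈ brokenPairs σ) :
    pfaffianTerm (orderSignMatrix _) (swap (pairEquiv m (k, 0)) (pairEquiv m (k, 1)) * σ) =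
      -pfaffianTerm (orderSignMatrix _) σ := by
  simp only [brokenPairs, mem_filter, mem_univ, true_and] at hk
  have hfactor (i : Fin m) :
      orderSignMatrix _ (swap (pairEquiv m (k, 0)) (pairEquiv m (k, 1)) (σ (pairEquiv m (i, 0))))
          (swap (pairEquiv m (k, 0)) (pairEquiv m (k, 1)) (σ (pairEquiv m (i, 1)))) =
        orderSignMatrix _ (σ (pairEquiv m (i, 0))) (σ (pairEquiv m (i, 1))) := by
    refine orderSignMatrix_swap_apply (pairEquiv_covBy k) fun h => hk ?_
    rcases Sym2.eq_iff.1 h with ⟨h₀, h₁⟩ | ⟨h₀, h₁⟩ <;> simp [← h₀, ← h₁]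
  have hne : pairEquiv m (k, 0) ≠ pairEquiv m (k, 1) := by simp
  simp only [pfaffianTerm, Perm.mul_apply, hfactor, Perm.sign_mul, Perm.sign_swap hne]
  push_cast
  ring

theorem sum_pfaffianTerm_orderSignMatrix_of_notMem :
    ∑ σ ∈ univ.filter (· ∉ pairStabilizer m), pfaffianTerm (orderSignMatrix _) σ = 0 := by
  have hbroken (σ) (hσ : σ ∈ univ.filter (· ∉ pairStabilizer m)) : (brokenPairs σ).Nonempty := by
    rw [nonempty_iff_ne_empty, Ne, brokenPairs_eq_empty_iff]
    simpa using hσ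
  refine sum_involution (fun σ hσ => swap (pairEquiv m ((brokenPairs σ).min' (hbroken σ hσ), 0))
    (pairEquiv m ((brokenPairs σ).min' (hbroken σ hσ), 1)) * σ) ?_ ?_ ?_ ?_
  · intro σ hσ
    rw [pfaffianTerm_swap_mul (min'_mem _ _), add_neg_cancel]
  · intro σ hσ _
    rw [Ne, mul_eq_right, swap_eq_one_iff]
    simp
  · intro σ hσ
    simpa [← brokenPairs_eq_empty_iff, brokenPairs_swap_mul] using hσ
  · intro σ hσ
    simp only [brokenPairs_swap_mul, ← mul_assoc, Equiv.swap_mul_self, one_mul]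

def blockPerm (τ : Perm (Fin m)) (ρ : Fin m → Perm (Fin 2)) : Perm (Fin (2 * m)) :=
  (pairEquiv m).permCongr (prodCongrLeft (fun _ => τ) * prodCongrRight ρ)

theorem blockPerm_pairEquiv (τ : Perm (Fin m)) (ρ : Fin m → Perm (Fin 2)) (x : Fin m × Fin 2) :
    blockPerm τ ρ (pairEquiv m x) = pairEquiv m (τ x.1, ρ x.1 x.2) := by
  rw [blockPerm, permCongr_apply, symm_apply_apply]
  rfl

theorem sign_blockPerm (τ : Perm (Fin m)) (ρ : Fin m → Perm (Fin 2)) :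
    Perm.sign (blockPerm τ ρ) = ∏ i, Perm.sign (ρ i) := by
  rw [blockPerm, Perm.sign_permCongr, map_mul, Perm.sign_prodCongrLeft, Perm.sign_prodCongrRight,
    prod_const, card_univ, Fintype.card_fin, Int.units_sq, one_mul]

theorem pfaffianTerm_orderSignMatrix_blockPerm (τ : Perm (Fin m)) (ρ : Fin m → Perm (Fin 2)) :
    pfaffianTerm (orderSignMatrix _) (blockPerm τ ρ) = 1 := by
  have hfactor (i : Fin m) :
      orderSignMatrix _ (blockPerm τ ρ (pairEquiv m (i, 0))) (blockPerm τ ρ (pairEquiv m (i, 1))) =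
        ((Perm.sign (ρ i) : ℤ) : ℝ) := by
    rw [blockPerm_pairEquiv, blockPerm_pairEquiv, ← orderSignMatrix_fin_two_apply_perm,
      ← orderSignMatrix_submatrix (strictMono_pairEquiv (τ i)), submatrix_apply]
  simp only [pfaffianTerm, hfactor, sign_blockPerm, Units.coe_prod, Int.cast_prod,
    ← prod_mul_distrib]
  refine prod_eq_one fun i _ => ?_
  rw [← Int.cast_mul, ← Units.val_mul, Int.units_mul_self, Units.val_one, Int.cast_one]

theorem exists_blockPerm_eq {σ : Perm (Fin (2 * m))} (hσ : σ ∈ pairStabilizer m) :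
    ∃ τ ρ, blockPerm τ ρ = σ := by
  set c : Fin m × Fin 2 → Fin m × Fin 2 := fun x => (pairEquiv m).symm (σ (pairEquiv m x))
  have hc_inj : Function.Injective c := by simp [c, Function.Injective]
  have hc_fst (i : Fin m) (r r' : Fin 2) : (c (i, r)).1 = (c (i, r')).1 := (hσ _ _).2 (by simp)
  have hτ : Function.Injective fun i => (c (i, 0)).1 := fun i j h => by
    simpa using (hσ _ _).1 h
  have hρ (i : Fin m) : Function.Injective fun r => (c (i, r)).2 := fun r r' h =>
    congrArg Prod.snd (hc_inj (Prod.ext (hc_fst i r r') h))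
  refine ⟨ofBijective _ hτ.bijective_of_finite, fun i => ofBijective _ (hρ i).bijective_of_finite,
    Equiv.ext fun p => ?_⟩
  obtain ⟨⟨i, r⟩, rfl⟩ := (pairEquiv m).surjective p
  rw [blockPerm_pairEquiv]
  change pairEquiv m ((c (i, 0)).1, (c (i, r)).2) = σ (pairEquiv m (i, r))
  rw [hc_fst i 0 r, Prod.mk.eta, apply_symm_apply]

theorem pfaffian_orderSignMatrix_pos : 0 < pfaffian (orderSignMatrix (Fin (2 * m))) := by
  have hmem : ∀ σ ∈ univ.filter (· ∈ pairStabilizer m),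
      pfaffianTerm (orderSignMatrix _) σ = 1 := fun σ hσ => by
    obtain ⟨τ, ρ, rfl⟩ := exists_blockPerm_eq (mem_filter.1 hσ).2
    exact pfaffianTerm_orderSignMatrix_blockPerm τ ρ
  have hcard : 0 < #(univ.filter (· ∈ pairStabilizer m)) := card_pos.2 ⟨1, by simp⟩
  rw [pfaffian_eq_sum_pfaffianTerm, ← sum_filter_add_sum_filter_not univ (· ∈ pairStabilizer m),
    sum_pfaffianTerm_orderSignMatrix_of_notMem, add_zero, sum_congr rfl hmem, sum_const, nsmul_one]
  positivity

end PfaffianTerm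

section Continuity

variable {m : ℕ}

theorem pfaffian_smul (c : ℝ) (A : Matrix (Fin (2 * m)) (Fin (2 * m)) ℝ) :
    pfaffian (c • A) = c ^ m * pfaffian A := by
  simp only [pfaffian, Matrix.smul_apply, smul_eq_mul, prod_mul_distrib, prod_const, card_univ,
    Fintype.card_fin, mul_sum]
  exact sum_congr rfl fun _ _ => by ring

theorem continuous_pfaffian : Continuous (pfaffian : Matrix (Fin (2 * m)) (Fin (2 * m)) ℝ → ℝ) := by
  unfold pfaffian
  fun_prop

/-- `pfaffian (A + t • B) = t ^ m * pfaffian (B + t⁻¹ • A)`, and the second factor tends to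
`pfaffian B`. -/
theorem eventually_pfaffian_add_smul_pos (A : Matrix (Fin (2 * m)) (Fin (2 * m)) ℝ)
    {B : Matrix (Fin (2 * m)) (Fin (2 * m)) ℝ} (hB : 0 < pfaffian B) :
    ∀ᶠ t : ℝ in atTop, 0 < pfaffian (A + t • B) := by
  have hcont : Continuous fun s : ℝ => pfaffian (B + s • A) :=
    continuous_pfaffian.comp (by fun_prop)
  have hlim : Tendsto (fun s : ℝ => pfaffian (B + s • A)) (𝓝 0) (𝓝 (pfaffian B)) := by
    simpa using hcont.tendsto 0
  have hnear := tendsto_inv_atTop_zero.eventually (hlim.eventually (eventually_gt_nhds hB))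
  filter_upwards [hnear, eventually_gt_atTop 0] with t ht ht₀
  have hsplit : A + t • B = t • (B + t⁻¹ • A) := by
    rw [smul_add, smul_smul, mul_inv_cancel₀ ht₀.ne', one_smul, add_comm]
  rw [hsplit, pfaffian_smul]
  positivity

end Continuity

theorem stmt_9_general {n : ℕ} (θ : Matrix (Fin n) (Fin n) ℝ) :
    ∃ t : ℕ, 0 < t ∧
      ∀ (m : ℕ), 1 ≤ m → 2 * m ≤ n → ∀ I : Fin (2 * m) → Fin n, StrictMono I →
        0 < pfaffian
          (((θ + (t : ℝ) •
            (Matrix.of fun i j : Fin n =>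
              if i < j then (1 : ℝ) else if j < i then -1 else 0))).submatrix I I) := by
  change ∃ t : ℕ, 0 < t ∧ ∀ m, 1 ≤ m → 2 * m ≤ n → ∀ I : Fin (2 * m) → Fin n, StrictMono I →
    0 < pfaffian ((θ + (t : ℝ) • orderSignMatrix (Fin n)).submatrix I I)
  have hminor (m : ℕ) (I : Fin (2 * m) → Fin n) (hI : StrictMono I) :
      ∀ᶠ t : ℕ in atTop, 0 < pfaffian ((θ + (t : ℝ) • orderSignMatrix (Fin n)).submatrix I I) := by
    have hsub (t : ℝ) : (θ + t • orderSignMatrix (Fin n)).submatrix I I =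
        θ.submatrix I I + t • orderSignMatrix (Fin (2 * m)) := by
      rw [← orderSignMatrix_submatrix hI]
      rfl
    simp only [hsub]
    exact tendsto_natCast_atTop_atTop.eventually
      (eventually_pfaffian_add_smul_pos _ pfaffian_orderSignMatrix_pos)
  have hall : ∀ᶠ t : ℕ in atTop, ∀ m ∈ range (n + 1), ∀ I : Fin (2 * m) → Fin n, StrictMono I →
      0 < pfaffian ((θ + (t : ℝ) • orderSignMatrix (Fin n)).submatrix I I) := by
    refine (eventually_all_finset _).2 fun m _ => eventually_all.2 fun I => ?_
    by_cases hI : StrictMono I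
    · exact (hminor m I hI).mono fun _ h _ => h
    · exact Eventually.of_forall fun _ h => absurd h hI
  obtain ⟨t, ht₀, ht⟩ := ((eventually_gt_atTop 0).and hall).exists
  exact ⟨t, ht₀, fun m _ hm I hI => ht m (mem_range.2 (by omega)) I hI⟩

/-- For any real skew-symmetric n×n matrix θ there is a positive integer t such
that every Pfaffian minor of θ + tZ is strictly positive, where Z is the
skew-symmetric matrix with all entries above the diagonal equal to 1. -/
theorem stmt_9 {n : ℕ} (θ : Matrix (Fin n) (Fin n) ℝ) (hθ : θᵀ = -θ) :
    ∃ t : ℕ, 0 < t ∧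
      ∀ (m : ℕ), 1 ≤ m → 2 * m ≤ n → ∀ I : Fin (2 * m) → Fin n, StrictMono I →
        0 < pfaffian
          (((θ + (t : ℝ) •
            (Matrix.of fun i j : Fin n =>
              if i < j then (1 : ℝ) else if j < i then -1 else 0))).submatrix I I) :=
  stmt_9_general θ
end
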